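/- arXiv:2007.14064 — 2 statements merged into one kernel-verified Lean document; each statement's English description precedes it below -/
import Mathlib

section
/- The symmetric parts of the matrices Z_ℓ, of Z_C + 𝐁 Z_ℓ⁻¹ 𝐁ᵀ, and of Z_R + (Z_C + 𝐁 Z_ℓ⁻¹ 𝐁ᵀ)⁻¹ are positive definite; in particular, all three matrices are invertible. (Here one uses R > 0, G > 0, R_ℓ > 0; the symmetric part of 𝐁 Z_ℓ⁻¹ 𝐁ᵀ equals (R_ℓ/(R_ℓ² + L_ℓ²ω*²))·𝐁𝐁ᵀ and is positive semidefinite.) -/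
noncomputable section
open Matrix
open scoped Kronecker

abbrev PSState (n m : ℕ) :=
  (Fin n → ℝ) × (Fin n → ℝ) × (Fin n × Fin 2 → ℝ) × (Fin n × Fin 2 → ℝ) × (Fin m × Fin 2 → ℝ)

def J2 : Matrix (Fin 2) (Fin 2) ℝ := !![0, -1; 1, 0]
def rvec (θ : ℝ) : Fin 2 → ℝ := ![-(Real.sin θ), Real.cos θ]
def RotM {n : ℕ} (γ : Fin n → ℝ) : Matrix (Fin n × Fin 2) (Fin n) ℝ :=
  Matrix.of fun p j => if p.1 = j then rvec (γ j) p.2 else 0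
def bigJ (k : ℕ) : Matrix (Fin k × Fin 2) (Fin k × Fin 2) ℝ :=
  (1 : Matrix (Fin k) (Fin k) ℝ) ⊗ₖ J2

def ZR (n : ℕ) (R L ωs : ℝ) : Matrix (Fin n × Fin 2) (Fin n × Fin 2) ℝ := R • 1 + (L * ωs) • bigJ n
def ZC (n : ℕ) (G C ωs : ℝ) : Matrix (Fin n × Fin 2) (Fin n × Fin 2) ℝ := G • 1 + (C * ωs) • bigJ n
def Zl (m : ℕ) (Rl Ll ωs : ℝ) : Matrix (Fin m × Fin 2) (Fin m × Fin 2) ℝ := Rl • 1 + (Ll * ωs) • bigJ m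
def BB {n m : ℕ} (𝓑 : Matrix (Fin n) (Fin m) ℝ) : Matrix (Fin n × Fin 2) (Fin m × Fin 2) ℝ :=
  𝓑 ⊗ₖ (1 : Matrix (Fin 2) (Fin 2) ℝ)

/-- The multi-converter power-system vector field. -/
def psf {n m : ℕ} (𝓑 : Matrix (Fin n) (Fin m) ℝ)
    (R L C G Rl Ll Cdc Kp η ωs vdc μ : ℝ)
    (z : PSState n m) (u : Fin n → ℝ) : PSState n m :=
  ( η • z.2.1,
    Cdc⁻¹ • (-(Kp • z.2.1) - (μ / 2) • ((RotM z.1)ᵀ *ᵥ z.2.2.1) + u),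
    L⁻¹ • (-(ZR n R L ωs *ᵥ z.2.2.1) + (μ / 2) • (RotM z.1 *ᵥ (z.2.1 + Function.const _ vdc)) - z.2.2.2.1),
    C⁻¹ • (-(ZC n G C ωs *ᵥ z.2.2.2.1) + z.2.2.1 - BB 𝓑 *ᵥ z.2.2.2.2),
    Ll⁻¹ • (-(Zl m Rl Ll ωs *ᵥ z.2.2.2.2) + (BB 𝓑)ᵀ *ᵥ z.2.2.2.1) )

/-- The symmetric part of a square real matrix. -/
def symPart {ι : Type*} [Fintype ι] (M : Matrix ι ι ℝ) : Matrix ι ι ℝ := (2:ℝ)⁻¹ • (M + Mᵀ)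

lemma J2_transpose : J2ᵀ = -J2 := by
  ext i j; fin_cases i <;> fin_cases j <;> simp [J2]

lemma J2_mul_J2 : J2 * J2 = -1 := by
  ext i j; fin_cases i <;> fin_cases j <;>
    simp [J2, Matrix.mul_apply, Fin.sum_univ_two, Matrix.one_apply]

lemma J2_apply_anti (i j : Fin 2) : J2 j i = -J2 i j := by
  fin_cases i <;> fin_cases j <;> simp [J2]

lemma bigJ_transpose (k : ℕ) : (bigJ k)ᵀ = -(bigJ k) := by
  ext ⟨i1, i2⟩ ⟨j1, j2⟩
  simp only [bigJ, transpose_apply, kroneckerMap_apply, Matrix.neg_apply, Matrix.one_apply]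
  rw [J2_apply_anti]
  by_cases h : i1 = j1 <;> simp [h, eq_comm]

lemma bigJ_mul_bigJ (k : ℕ) : bigJ k * bigJ k = -1 := by
  have h1 : (1 : Matrix (Fin k) (Fin k) ℝ) ⊗ₖ (-(1 : Matrix (Fin 2) (Fin 2) ℝ))
      = -((1 : Matrix (Fin k) (Fin k) ℝ) ⊗ₖ (1 : Matrix (Fin 2) (Fin 2) ℝ)) := by
    ext ⟨i1, i2⟩ ⟨j1, j2⟩
    simp only [kroneckerMap_apply, Matrix.neg_apply, mul_neg]
  rw [bigJ, ← Matrix.mul_kronecker_mul]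
  rw [Matrix.one_mul, J2_mul_J2, h1, Matrix.one_kronecker_one]

lemma quad_transpose {ι : Type*} [Fintype ι] (M : Matrix ι ι ℝ) (v : ι → ℝ) :
    v ⬝ᵥ (Mᵀ *ᵥ v) = v ⬝ᵥ (M *ᵥ v) := by
  rw [dotProduct_mulVec, vecMul_transpose, dotProduct_comm]

lemma quad_skew {ι : Type*} [Fintype ι] {M : Matrix ι ι ℝ} (h : Mᵀ = -M) (v : ι → ℝ) :
    v ⬝ᵥ (M *ᵥ v) = 0 := by
  have := quad_transpose M v
  rw [h] at this
  simp only [neg_mulVec, dotProduct_neg] at this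
  linarith

lemma quad_symPart {ι : Type*} [Fintype ι] (M : Matrix ι ι ℝ) (v : ι → ℝ) :
    v ⬝ᵥ (symPart M *ᵥ v) = v ⬝ᵥ (M *ᵥ v) := by
  simp only [symPart, smul_mulVec, add_mulVec, dotProduct_smul, dotProduct_add,
    quad_transpose, smul_eq_mul]
  ring

lemma symPart_isHermitian {ι : Type*} [Fintype ι] (M : Matrix ι ι ℝ) :
    (symPart M).IsHermitian := by
  unfold Matrix.IsHermitian
  rw [conjTranspose_eq_transpose_of_trivial]
  simp [symPart, transpose_add, add_comm]

lemma posDef_symPart {ι : Type*} [Fintype ι] (M : Matrix ι ι ℝ)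
    (h : ∀ v, v ≠ 0 → 0 < v ⬝ᵥ (M *ᵥ v)) : (symPart M).PosDef := by
  refine Matrix.posDef_iff_dotProduct_mulVec.mpr ⟨symPart_isHermitian M, fun v hv => ?_⟩
  simpa [quad_symPart] using h v hv

lemma dot_self_pos {ι : Type*} [Fintype ι] {v : ι → ℝ} (hv : v ≠ 0) : 0 < v ⬝ᵥ v := by
  simpa using dotProduct_star_self_pos_iff.2 hv

lemma isUnit_of_posDef_symPart {ι : Type*} [Fintype ι] [DecidableEq ι] {M : Matrix ι ι ℝ}
    (h : (symPart M).PosDef) : IsUnit M := by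
  rw [Matrix.isUnit_iff_isUnit_det, isUnit_iff_ne_zero]
  intro hdet
  obtain ⟨v, hv, hMv⟩ := (Matrix.exists_mulVec_eq_zero_iff).2 hdet
  have := h.dotProduct_mulVec_pos hv
  rw [show star v = v from rfl, quad_symPart, hMv] at this
  simp at this

lemma quad_Z {k : ℕ} (a b : ℝ) (v : Fin k × Fin 2 → ℝ) :
    v ⬝ᵥ ((a • (1 : Matrix (Fin k × Fin 2) (Fin k × Fin 2) ℝ) + b • bigJ k) *ᵥ v)
      = a * (v ⬝ᵥ v) := by
  have hJ := quad_skew (bigJ_transpose k) v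
  simp [add_mulVec, smul_mulVec, dotProduct_add, dotProduct_smul, hJ]

lemma Zl_inv {m : ℕ} {Rl Ll ωs : ℝ} (hc : Rl ^ 2 + Ll ^ 2 * ωs ^ 2 ≠ 0) :
    (Zl m Rl Ll ωs)⁻¹
      = (Rl ^ 2 + Ll ^ 2 * ωs ^ 2)⁻¹ • (Rl • 1 - (Ll * ωs) • bigJ m) := by
  apply Matrix.inv_eq_right_inv
  rw [Zl, Matrix.mul_smul]
  have key : (Rl • (1 : Matrix (Fin m × Fin 2) (Fin m × Fin 2) ℝ) + (Ll * ωs) • bigJ m) *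
      (Rl • 1 - (Ll * ωs) • bigJ m) = (Rl ^ 2 + Ll ^ 2 * ωs ^ 2) • 1 := by
    rw [add_mul, mul_sub, mul_sub]
    simp only [Matrix.smul_mul, Matrix.mul_smul, Matrix.one_mul, Matrix.mul_one, smul_smul,
      bigJ_mul_bigJ, smul_neg]
    module
  rw [key, smul_smul, inv_mul_cancel₀ hc, one_smul]

lemma dot_self_nonneg {ι : Type*} [Fintype ι] (v : ι → ℝ) : 0 ≤ v ⬝ᵥ v := by
  simpa using dotProduct_star_self_nonneg v

lemma quad_AAt {ι κ : Type*} [Fintype ι] [Fintype κ]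
    (A : Matrix ι κ ℝ) (v : ι → ℝ) :
    v ⬝ᵥ ((A * Aᵀ) *ᵥ v) = (Aᵀ *ᵥ v) ⬝ᵥ (Aᵀ *ᵥ v) := by
  rw [← Matrix.mulVec_mulVec, dotProduct_mulVec (A := A), ← Matrix.mulVec_transpose]

lemma quad_mul_mul {ι κ : Type*} [Fintype ι] [Fintype κ]
    (A : Matrix ι κ ℝ) (X : Matrix κ κ ℝ) (v : ι → ℝ) :
    v ⬝ᵥ ((A * X * Aᵀ) *ᵥ v) = (Aᵀ *ᵥ v) ⬝ᵥ (X *ᵥ (Aᵀ *ᵥ v)) := by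
  rw [← Matrix.mulVec_mulVec, ← Matrix.mulVec_mulVec, dotProduct_mulVec (A := A),
    ← Matrix.mulVec_transpose]

lemma symPart_S {n m : ℕ} (𝓑 : Matrix (Fin n) (Fin m) ℝ) {Rl Ll ωs : ℝ}
    (hc : Rl ^ 2 + Ll ^ 2 * ωs ^ 2 ≠ 0) :
    symPart (BB 𝓑 * (Zl m Rl Ll ωs)⁻¹ * (BB 𝓑)ᵀ)
      = (Rl / (Rl ^ 2 + Ll ^ 2 * ωs ^ 2)) • (BB 𝓑 * (BB 𝓑)ᵀ) := by
  set c := Rl ^ 2 + Ll ^ 2 * ωs ^ 2 with hcdef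
  have hZi : (Zl m Rl Ll ωs)⁻¹ + ((Zl m Rl Ll ωs)⁻¹)ᵀ = (2 * Rl / c) • 1 := by
    rw [Zl_inv hc]
    rw [transpose_smul, transpose_sub, transpose_smul, transpose_smul, transpose_one,
      bigJ_transpose]
    rw [show (2 * Rl / c) = c⁻¹ * (2 * Rl) by ring]
    module
  rw [symPart, show (BB 𝓑 * (Zl m Rl Ll ωs)⁻¹ * (BB 𝓑)ᵀ)ᵀ
      = BB 𝓑 * ((Zl m Rl Ll ωs)⁻¹)ᵀ * (BB 𝓑)ᵀ by
    rw [transpose_mul, transpose_mul, transpose_transpose, ← Matrix.mul_assoc]]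
  simp only [Matrix.mul_assoc]
  rw [← Matrix.mul_add, ← Matrix.add_mul, hZi, Matrix.smul_mul, Matrix.one_mul,
    Matrix.mul_smul, smul_smul]
  congr 1
  field_simp

theorem stmt1 {n m : ℕ} (𝓑 : Matrix (Fin n) (Fin m) ℝ)
    (R L C G Rl Ll ωs : ℝ)
    (hR : 0 < R) (hL : 0 < L) (hC : 0 < C) (hG : 0 < G) (hRl : 0 < Rl) (hLl : 0 < Ll)
    (hωs : 0 < ωs) :
    (symPart (Zl m Rl Ll ωs)).PosDef ∧
    (symPart (ZC n G C ωs + BB 𝓑 * (Zl m Rl Ll ωs)⁻¹ * (BB 𝓑)ᵀ)).PosDef ∧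
    (symPart (ZR n R L ωs + (ZC n G C ωs + BB 𝓑 * (Zl m Rl Ll ωs)⁻¹ * (BB 𝓑)ᵀ)⁻¹)).PosDef ∧
    IsUnit (Zl m Rl Ll ωs) ∧
    IsUnit (ZC n G C ωs + BB 𝓑 * (Zl m Rl Ll ωs)⁻¹ * (BB 𝓑)ᵀ) ∧
    IsUnit (ZR n R L ωs + (ZC n G C ωs + BB 𝓑 * (Zl m Rl Ll ωs)⁻¹ * (BB 𝓑)ᵀ)⁻¹) ∧
    symPart (BB 𝓑 * (Zl m Rl Ll ωs)⁻¹ * (BB 𝓑)ᵀ)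
      = (Rl / (Rl ^ 2 + Ll ^ 2 * ωs ^ 2)) • (BB 𝓑 * (BB 𝓑)ᵀ) ∧
    (symPart (BB 𝓑 * (Zl m Rl Ll ωs)⁻¹ * (BB 𝓑)ᵀ)).PosSemidef := by
  have hc : (0:ℝ) < Rl ^ 2 + Ll ^ 2 * ωs ^ 2 := by positivity
  set S := BB 𝓑 * (Zl m Rl Ll ωs)⁻¹ * (BB 𝓑)ᵀ with hSdef
  set N := ZC n G C ωs + S with hNdef
  have hSsym : symPart S = (Rl / (Rl ^ 2 + Ll ^ 2 * ωs ^ 2)) • (BB 𝓑 * (BB 𝓑)ᵀ) :=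
    symPart_S 𝓑 hc.ne'
  -- quadratic form of S is nonnegative
  have hSquad : ∀ v, 0 ≤ v ⬝ᵥ (S *ᵥ v) := by
    intro v
    rw [← quad_symPart, hSsym, smul_mulVec, dotProduct_smul, smul_eq_mul,
      quad_AAt]
    exact mul_nonneg (by positivity) (dot_self_nonneg _)
  -- Zl
  have hZlquad : ∀ v, v ≠ 0 → 0 < v ⬝ᵥ (Zl m Rl Ll ωs *ᵥ v) := by
    intro v hv
    rw [Zl, quad_Z]
    exact mul_pos hRl (dot_self_pos hv)
  have P1 : (symPart (Zl m Rl Ll ωs)).PosDef := posDef_symPart _ hZlquad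
  have U1 : IsUnit (Zl m Rl Ll ωs) := isUnit_of_posDef_symPart P1
  -- N = ZC + S
  have hNquad : ∀ v, v ≠ 0 → 0 < v ⬝ᵥ (N *ᵥ v) := by
    intro v hv
    rw [hNdef, add_mulVec, dotProduct_add, ZC, quad_Z]
    have := hSquad v
    have := mul_pos hG (dot_self_pos hv)
    linarith
  have P2 : (symPart N).PosDef := posDef_symPart _ hNquad
  have U2 : IsUnit N := isUnit_of_posDef_symPart P2
  -- quadratic form of N⁻¹ is nonneg
  have hNinvquad : ∀ v, 0 ≤ v ⬝ᵥ (N⁻¹ *ᵥ v) := by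
    intro v
    set w := N⁻¹ *ᵥ v with hw
    have hv : N *ᵥ w = v := by
      rw [hw, Matrix.mulVec_mulVec, Matrix.mul_nonsing_inv _ ((Matrix.isUnit_iff_isUnit_det _).mp U2),
        Matrix.one_mulVec]
    rw [← hv, dotProduct_comm]
    rcases eq_or_ne w 0 with h | h
    · simp [h]
    · exact le_of_lt (hNquad w h)
  -- ZR + N⁻¹
  have hZRquad : ∀ v, v ≠ 0 → 0 < v ⬝ᵥ ((ZR n R L ωs + N⁻¹) *ᵥ v) := by
    intro v hv
    rw [add_mulVec, dotProduct_add, ZR, quad_Z]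
    have := hNinvquad v
    have := mul_pos hR (dot_self_pos hv)
    linarith
  have P3 : (symPart (ZR n R L ωs + N⁻¹)).PosDef := posDef_symPart _ hZRquad
  have U3 : IsUnit (ZR n R L ωs + N⁻¹) := isUnit_of_posDef_symPart P3
  have hPSD : (symPart S).PosSemidef := by
    refine Matrix.posSemidef_iff_dotProduct_mulVec.mpr ⟨symPart_isHermitian _, fun x => ?_⟩
    show (0:ℝ) ≤ star x ⬝ᵥ _
    rw [show star x = x from rfl, quad_symPart]
    exact hSquad x
  exact ⟨P1, P2, P3, U1, U2, U3, hSsym, hPSD⟩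
end
end

section
/- The equilibrium set of the multi-converter model is invariant under the rotational symmetry: if z* = (γ*, ṽ*, i*, v*, i_ℓ*) satisfies f(z*, u) = 0 for some input u ∈ ℝⁿ, then for every θ ∈ ℝ the point (γ* + θ1ₙ, ṽ*, (I_n⊗R(θ))i*, (I_n⊗R(θ))v*, (I_m⊗R(θ))i_ℓ*), with R(θ) = [[cos θ, −sin θ],[sin θ, cos θ]], also satisfies f(·, u) = 0. -/
noncomputable section
open Matrix
open scoped Kronecker

/-- The 2×2 rotation matrix. -/
def Rtheta (θ : ℝ) : Matrix (Fin 2) (Fin 2) ℝ :=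
  !![Real.cos θ, -(Real.sin θ); Real.sin θ, Real.cos θ]

/-- `I_k ⊗ R(θ)`, rotating each 2-dimensional block of an AC signal. -/
def bigR (k : ℕ) (θ : ℝ) : Matrix (Fin k × Fin 2) (Fin k × Fin 2) ℝ :=
  (1 : Matrix (Fin k) (Fin k) ℝ) ⊗ₖ Rtheta θ

/-- The symmetry action `z ↦ θ·s₀ + S(θ) z` on the state space. -/
def rotAction {n m : ℕ} (θ : ℝ) (z : PSState n m) : PSState n m :=
  (z.1 + Function.const _ θ, z.2.1, bigR n θ *ᵥ z.2.2.1, bigR n θ *ᵥ z.2.2.2.1,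
    bigR m θ *ᵥ z.2.2.2.2)

/-- The linear part `S(θ)` of the symmetry action (no angle shift). -/
def rotLin {n m : ℕ} (θ : ℝ) (w : PSState n m) : PSState n m :=
  (w.1, w.2.1, bigR n θ *ᵥ w.2.2.1, bigR n θ *ᵥ w.2.2.2.1, bigR m θ *ᵥ w.2.2.2.2)

lemma RthetaT_mul (θ : ℝ) : (Rtheta θ)ᵀ * Rtheta θ = 1 := by
  ext i j
  fin_cases i <;> fin_cases j <;>
    simp [Rtheta, Matrix.mul_apply, Fin.sum_univ_two, Matrix.one_apply, Matrix.transpose_apply,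
      Matrix.vecHead, Matrix.vecTail] <;>
    nlinarith [Real.sin_sq_add_cos_sq θ]

lemma J2_mul_Rtheta (θ : ℝ) : J2 * Rtheta θ = Rtheta θ * J2 := by
  ext i j
  fin_cases i <;> fin_cases j <;>
    simp [Rtheta, J2, Matrix.mul_apply, Fin.sum_univ_two]

lemma Rtheta_mulVec_rvec (θ φ : ℝ) : Rtheta θ *ᵥ rvec φ = rvec (φ + θ) := by
  ext a
  fin_cases a <;>
    simp [Rtheta, rvec, Matrix.mulVec, dotProduct, Fin.sum_univ_two,
      Real.sin_add, Real.cos_add] <;> ring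

lemma bigRT_mul_bigR (k : ℕ) (θ : ℝ) : (bigR k θ)ᵀ * bigR k θ = 1 := by
  rw [bigR, ← Matrix.kroneckerMap_transpose, Matrix.transpose_one,
    ← Matrix.mul_kronecker_mul, one_mul, RthetaT_mul, Matrix.one_kronecker_one]

lemma bigJ_mul_bigR (k : ℕ) (θ : ℝ) : bigJ k * bigR k θ = bigR k θ * bigJ k := by
  rw [bigJ, bigR, ← Matrix.mul_kronecker_mul, ← Matrix.mul_kronecker_mul, one_mul,
    J2_mul_Rtheta]

lemma Z_mul_bigR (c d : ℝ) (k : ℕ) (θ : ℝ) :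
    (c • 1 + d • bigJ k) * bigR k θ = bigR k θ * (c • 1 + d • bigJ k) := by
  rw [add_mul, mul_add, Matrix.smul_mul, Matrix.smul_mul, Matrix.mul_smul, Matrix.mul_smul,
    one_mul, mul_one, bigJ_mul_bigR]

lemma ZR_comm (n : ℕ) (R L ωs θ : ℝ) :
    ZR n R L ωs * bigR n θ = bigR n θ * ZR n R L ωs := Z_mul_bigR R (L * ωs) n θ

lemma ZC_comm (n : ℕ) (G C ωs θ : ℝ) :
    ZC n G C ωs * bigR n θ = bigR n θ * ZC n G C ωs := Z_mul_bigR G (C * ωs) n θ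

lemma Zl_comm (m : ℕ) (Rl Ll ωs θ : ℝ) :
    Zl m Rl Ll ωs * bigR m θ = bigR m θ * Zl m Rl Ll ωs := Z_mul_bigR Rl (Ll * ωs) m θ

lemma BB_mul_bigR {n m : ℕ} (𝓑 : Matrix (Fin n) (Fin m) ℝ) (θ : ℝ) :
    BB 𝓑 * bigR m θ = bigR n θ * BB 𝓑 := by
  rw [BB, bigR, bigR, ← Matrix.mul_kronecker_mul, ← Matrix.mul_kronecker_mul]
  simp

lemma BBT_mul_bigR {n m : ℕ} (𝓑 : Matrix (Fin n) (Fin m) ℝ) (θ : ℝ) :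
    (BB 𝓑)ᵀ * bigR n θ = bigR m θ * (BB 𝓑)ᵀ := by
  rw [BB, ← Matrix.kroneckerMap_transpose, Matrix.transpose_one, bigR, bigR,
    ← Matrix.mul_kronecker_mul, ← Matrix.mul_kronecker_mul]
  simp

lemma RotM_shift {n : ℕ} (γ : Fin n → ℝ) (θ : ℝ) :
    RotM (γ + Function.const _ θ) = bigR n θ * RotM γ := by
  ext ⟨k, a⟩ j
  simp only [RotM, bigR, Matrix.mul_apply, Matrix.of_apply, Matrix.kroneckerMap_apply,
    Fintype.sum_prod_type, Matrix.one_apply, ite_mul, mul_ite, mul_zero, zero_mul, one_mul,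
    Finset.sum_ite_eq, Finset.mem_univ, if_true]
  by_cases h : k = j
  · subst h
    simp only [if_true, Pi.add_apply, Function.const_apply]
    rw [← Rtheta_mulVec_rvec θ (γ k)]
    simp [Matrix.mulVec, dotProduct, Fin.sum_univ_two]
  · simp [h]

theorem stmt3 {n m : ℕ} (𝓑 : Matrix (Fin n) (Fin m) ℝ)
    (R L C G Rl Ll Cdc Kp η ωs vdc μ : ℝ)
    (hR : 0 < R) (hL : 0 < L) (hC : 0 < C) (hG : 0 < G) (hRl : 0 < Rl) (hLl : 0 < Ll)
    (hCdc : 0 < Cdc) (hKp : 0 < Kp) (hη : 0 < η) (hωs : 0 < ωs) (hvdc : 0 < vdc)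
    (hμ : μ ∈ Set.Ioo (0:ℝ) 1)
    (zstar : PSState n m) (u : Fin n → ℝ)
    (heq : psf 𝓑 R L C G Rl Ll Cdc Kp η ωs vdc μ zstar u = 0) :
    ∀ θ : ℝ, psf 𝓑 R L C G Rl Ll Cdc Kp η ωs vdc μ (rotAction θ zstar) u = 0 := by
  intro θ
  have key : psf 𝓑 R L C G Rl Ll Cdc Kp η ωs vdc μ (rotAction θ zstar) u
      = rotLin θ (psf 𝓑 R L C G Rl Ll Cdc Kp η ωs vdc μ zstar u) := by
    obtain ⟨γ, w, i, v, il⟩ := zstar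
    simp only [psf, rotAction, rotLin, Prod.mk.injEq]
    refine ⟨trivial, ?_, ?_, ?_, ?_⟩
    · rw [RotM_shift, Matrix.transpose_mul, ← Matrix.mulVec_mulVec, Matrix.mulVec_mulVec
        (v := i), bigRT_mul_bigR, Matrix.one_mulVec]
    · rw [RotM_shift]
      simp only [Matrix.mulVec_smul, Matrix.mulVec_add, Matrix.mulVec_sub, Matrix.mulVec_neg,
        Matrix.mulVec_mulVec]
      rw [ZR_comm]
    · simp only [Matrix.mulVec_smul, Matrix.mulVec_add, Matrix.mulVec_sub, Matrix.mulVec_neg,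
        Matrix.mulVec_mulVec]
      rw [ZC_comm, BB_mul_bigR]
    · simp only [Matrix.mulVec_smul, Matrix.mulVec_add, Matrix.mulVec_sub, Matrix.mulVec_neg,
        Matrix.mulVec_mulVec]
      rw [Zl_comm, BBT_mul_bigR]
  rw [key, heq]
  simp [rotLin, Prod.ext_iff, Matrix.mulVec_zero]
end
end
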